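/- Let F : ℝ^d → ℝ be twice continuously differentiable, μ-strongly convex and L-smooth with respect to ‖·‖ with unique minimizer x⋆, and suppose its Hessian satisfies ‖∇²F(x⋆)⁻¹(∇²F(x) − ∇²F(x'))‖ ≤ L_H‖x − x'‖ for all x, x' (operator norms induced by ‖·‖), with L_H > 0. Let a ∈ ℝ^d satisfy ‖∇²F(x⋆)⁻¹ a‖ ≤ 1/(4L_H). Then the equation ∇F(x) = a has a unique solution x(a), and it satisfies ‖x(a) − x⋆‖ ≤ 2‖∇²F(x⋆)⁻¹ a‖ ≤ 1/(2L_H). -/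

import Mathlib

open MeasureTheory Matrix Real

noncomputable section

/-- The Hilbert norm `‖x‖ = √⟨x, Qx⟩` induced by a positive definite matrix `Q`. -/
def qnorm {d : ℕ} (Q : Matrix (Fin d) (Fin d) ℝ) (x : Fin d → ℝ) : ℝ :=
  Real.sqrt (x ⬝ᵥ Q.mulVec x)

/-- Operator norm of a matrix induced by the norm `qnorm Q`. -/
def qOpNorm {d : ℕ} (Q : Matrix (Fin d) (Fin d) ℝ) (M : Matrix (Fin d) (Fin d) ℝ) : ℝ :=
  sSup {r : ℝ | ∃ v : Fin d → ℝ, qnorm Q v = 1 ∧ r = qnorm Q (M.mulVec v)}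

/-- The continuous linear functional `w ↦ ⟨v, w⟩` (Euclidean dot product). -/
def dotCLM {d : ℕ} (v : Fin d → ℝ) : (Fin d → ℝ) →L[ℝ] ℝ :=
  LinearMap.toContinuousLinearMap
    { toFun := fun w => v ⬝ᵥ w
      map_add' := fun a b => by simp [dotProduct_add]
      map_smul' := fun c a => by simp [dotProduct_smul] }

/-- The continuous linear map `v ↦ M v`. -/
def mulVecCLM {d : ℕ} (M : Matrix (Fin d) (Fin d) ℝ) : (Fin d → ℝ) →L[ℝ] (Fin d → ℝ) :=
  LinearMap.toContinuousLinearMap M.mulVecLin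

variable {d : ℕ} {Q : Matrix (Fin d) (Fin d) ℝ}

lemma qform_nonneg (hQ : Q.PosDef) (x : Fin d → ℝ) : 0 ≤ x ⬝ᵥ Q.mulVec x := by
  simpa using hQ.posSemidef.dotProduct_mulVec_nonneg x

lemma qnorm_nonneg (x : Fin d → ℝ) : 0 ≤ qnorm Q x := Real.sqrt_nonneg _

lemma qnorm_sq (hQ : Q.PosDef) (x : Fin d → ℝ) : qnorm Q x ^ 2 = x ⬝ᵥ Q.mulVec x := by
  rw [qnorm, Real.sq_sqrt (qform_nonneg hQ x)]

lemma qnorm_pos (hQ : Q.PosDef) {x : Fin d → ℝ} (hx : x ≠ 0) : 0 < qnorm Q x := by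
  have h := hQ.dotProduct_mulVec_pos hx
  simp only [star_trivial] at h
  exact Real.sqrt_pos.2 h

lemma qnorm_eq_zero_iff (hQ : Q.PosDef) {x : Fin d → ℝ} : qnorm Q x = 0 ↔ x = 0 := by
  constructor
  · intro h
    by_contra hx
    exact absurd h (ne_of_gt (qnorm_pos hQ hx))
  · rintro rfl; simp [qnorm]

lemma qform_comm (hQ : Q.PosDef) (x y : Fin d → ℝ) : x ⬝ᵥ Q.mulVec y = y ⬝ᵥ Q.mulVec x := by
  have hsym : Qᵀ = Q := by
    rw [← Matrix.conjTranspose_eq_transpose_of_trivial]; exact hQ.isHermitian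
  rw [Matrix.dotProduct_mulVec, ← Matrix.mulVec_transpose, hsym, dotProduct_comm]

lemma qnorm_smul (c : ℝ) (x : Fin d → ℝ) : qnorm Q (c • x) = |c| * qnorm Q x := by
  rw [qnorm, qnorm, Matrix.mulVec_smul, dotProduct_smul, smul_dotProduct]
  simp only [smul_eq_mul, ← mul_assoc]
  rw [show c * c * (x ⬝ᵥ Q.mulVec x) = c^2 * (x ⬝ᵥ Q.mulVec x) by ring,
    Real.sqrt_mul (sq_nonneg c), Real.sqrt_sq_eq_abs]

lemma qnorm_neg (x : Fin d → ℝ) : qnorm Q (-x) = qnorm Q x := by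
  have := qnorm_smul (Q := Q) (-1) x
  simpa using this

-- Cauchy-Schwarz
lemma qform_cs (hQ : Q.PosDef) (x y : Fin d → ℝ) :
    x ⬝ᵥ Q.mulVec y ≤ qnorm Q x * qnorm Q y := by
  rcases eq_or_ne y 0 with rfl | hy
  · simp [qnorm]
  · set qy := qnorm Q y with hqy
    have hqy0 : 0 < qy := qnorm_pos hQ hy
    set t : ℝ := (x ⬝ᵥ Q.mulVec y) / qy ^ 2 with ht
    have h0 : 0 ≤ (x - t • y) ⬝ᵥ Q.mulVec (x - t • y) := qform_nonneg hQ _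
    have hexp : (x - t • y) ⬝ᵥ Q.mulVec (x - t • y)
        = x ⬝ᵥ Q.mulVec x - 2 * t * (x ⬝ᵥ Q.mulVec y) + t^2 * (y ⬝ᵥ Q.mulVec y) := by
      simp only [Matrix.mulVec_sub, Matrix.mulVec_smul, sub_dotProduct,
        dotProduct_sub, smul_dotProduct, dotProduct_smul,
        smul_eq_mul, qform_comm hQ y x]
      ring
    have hyy : y ⬝ᵥ Q.mulVec y = qy ^ 2 := (qnorm_sq hQ y).symm
    have hxx : x ⬝ᵥ Q.mulVec x = qnorm Q x ^ 2 := (qnorm_sq hQ x).symm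
    rw [hexp, hyy, hxx] at h0
    have key : (x ⬝ᵥ Q.mulVec y)^2 ≤ (qnorm Q x)^2 * qy^2 := by
      have h2 : qy^2 ≠ 0 := by positivity
      have e1 : (qnorm Q x^2 - 2*t*(x ⬝ᵥ Q.mulVec y) + t^2*qy^2) * qy^2
          = qnorm Q x^2*qy^2 - (x ⬝ᵥ Q.mulVec y)^2 := by
        rw [ht]; field_simp; ring
      nlinarith [mul_nonneg h0 (sq_nonneg qy)]
    calc x ⬝ᵥ Q.mulVec y ≤ |x ⬝ᵥ Q.mulVec y| := le_abs_self _
      _ ≤ qnorm Q x * qy := by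
          rw [← Real.sqrt_sq_eq_abs]
          have : qnorm Q x * qy = Real.sqrt ((qnorm Q x)^2 * qy^2) := by
            rw [Real.sqrt_mul (sq_nonneg _), Real.sqrt_sq (qnorm_nonneg x),
              Real.sqrt_sq hqy0.le]
          rw [this]
          exact Real.sqrt_le_sqrt key

lemma qnorm_add_le (hQ : Q.PosDef) (x y : Fin d → ℝ) :
    qnorm Q (x + y) ≤ qnorm Q x + qnorm Q y := by
  have h1 : qnorm Q (x+y) ^2 ≤ (qnorm Q x + qnorm Q y)^2 := by
    rw [qnorm_sq hQ]
    have hexp : (x + y) ⬝ᵥ Q.mulVec (x + y)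
        = x ⬝ᵥ Q.mulVec x + 2 * (x ⬝ᵥ Q.mulVec y) + y ⬝ᵥ Q.mulVec y := by
      simp only [Matrix.mulVec_add, add_dotProduct, dotProduct_add,
        qform_comm hQ y x]
      ring
    rw [hexp, ← qnorm_sq hQ x, ← qnorm_sq hQ y]
    have := qform_cs hQ x y
    nlinarith
  have h2 : 0 ≤ qnorm Q x + qnorm Q y := add_nonneg (qnorm_nonneg x) (qnorm_nonneg y)
  nlinarith [qnorm_nonneg (Q := Q) (x + y)]

lemma qnorm_sub_le (hQ : Q.PosDef) (x y : Fin d → ℝ) :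
    qnorm Q (x - y) ≤ qnorm Q x + qnorm Q y := by
  rw [sub_eq_add_neg]
  simpa [qnorm_neg] using qnorm_add_le hQ x (-y)

lemma abs_qnorm_sub_qnorm_le (hQ : Q.PosDef) (x y : Fin d → ℝ) :
    |qnorm Q x - qnorm Q y| ≤ qnorm Q (x - y) := by
  rw [abs_le]
  constructor
  · have := qnorm_add_le hQ (x - y) y
    simp only [sub_add_cancel] at this
    have h2 := qnorm_sub_le hQ y x
    have h3 : qnorm Q (y - x) = qnorm Q (x - y) := by
      rw [← neg_sub x y, qnorm_neg]
    have := qnorm_add_le hQ (y - x) x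
    simp only [sub_add_cancel] at this
    linarith [this, h3 ▸ this]
  · have := qnorm_add_le hQ (x - y) y
    simp only [sub_add_cancel] at this
    linarith

lemma qnorm_continuous : Continuous fun x : Fin d → ℝ => qnorm Q x := by
  apply Real.continuous_sqrt.comp
  exact continuous_id.dotProduct (continuous_const.matrix_mulVec continuous_id)

lemma qnorm_lower (hQ : Q.PosDef) (hd : 1 ≤ d) :
    ∃ c > 0, ∀ x : Fin d → ℝ, c * ‖x‖ ≤ qnorm Q x := by
  have hcomp : IsCompact (Metric.sphere (0 : Fin d → ℝ) 1) := isCompact_sphere _ _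
  have hne : (Metric.sphere (0 : Fin d → ℝ) 1).Nonempty := by
    have hne' : Nonempty (Fin d) := ⟨⟨0, hd⟩⟩
    have : Nontrivial (Fin d → ℝ) := inferInstance
    exact NormedSpace.sphere_nonempty.mpr one_pos.le
  obtain ⟨v, hv, hmin⟩ := hcomp.exists_isMinOn hne (qnorm_continuous (Q:=Q)).continuousOn
  have hv1 : ‖v‖ = 1 := by simpa using hv
  have hv0 : v ≠ 0 := by intro h; rw [h] at hv1; simp at hv1
  refine ⟨qnorm Q v, qnorm_pos hQ hv0, fun x => ?_⟩
  rcases eq_or_ne x 0 with rfl | hx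
  · simp [qnorm]
  · have hnx : (0:ℝ) < ‖x‖ := norm_pos_iff.2 hx
    have hu : (‖x‖⁻¹ • x) ∈ Metric.sphere (0 : Fin d → ℝ) 1 := by
      simp [norm_smul, abs_of_pos (inv_pos.2 hnx), inv_mul_cancel₀ hnx.ne']
    have := hmin hu
    have hq : qnorm Q (‖x‖⁻¹ • x) = ‖x‖⁻¹ * qnorm Q x := by
      rw [qnorm_smul, abs_of_pos (inv_pos.2 hnx)]
    simp only [Set.mem_setOf_eq] at this
    rw [hq] at this
    calc qnorm Q v * ‖x‖ ≤ (‖x‖⁻¹ * qnorm Q x) * ‖x‖ := by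
          apply mul_le_mul_of_nonneg_right _ hnx.le
          exact this
      _ = qnorm Q x := by field_simp

lemma qOpNorm_bound (hQ : Q.PosDef) (hd : 1 ≤ d) (M : Matrix (Fin d) (Fin d) ℝ)
    (v : Fin d → ℝ) : qnorm Q (M.mulVec v) ≤ qOpNorm Q M * qnorm Q v := by
  obtain ⟨c, hc, hcl⟩ := qnorm_lower hQ hd
  set S := {r : ℝ | ∃ v : Fin d → ℝ, qnorm Q v = 1 ∧ r = qnorm Q (M.mulVec v)} with hS
  have hbdd : BddAbove S := by
    have hSim : S = (fun v => qnorm Q (M.mulVec v)) '' {v | qnorm Q v = 1} := by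
      ext r; constructor
      · rintro ⟨w, hw, rfl⟩; exact ⟨w, hw, rfl⟩
      · rintro ⟨w, hw, rfl⟩; exact ⟨w, hw, rfl⟩
    rw [hSim]
    have hcompact : IsCompact {v : Fin d → ℝ | qnorm Q v = 1} := by
      have hclosed : IsClosed {v : Fin d → ℝ | qnorm Q v = 1} :=
        isClosed_eq qnorm_continuous continuous_const
      have hbd : Bornology.IsBounded {v : Fin d → ℝ | qnorm Q v = 1} := by
        apply Bornology.IsBounded.subset (Metric.isBounded_closedBall (x := (0: Fin d → ℝ)) (r := c⁻¹))
        intro w hw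
        simp only [Set.mem_setOf_eq] at hw
        simp only [Metric.mem_closedBall, dist_zero_right]
        have := hcl w
        rw [hw] at this
        calc ‖w‖ ≤ c⁻¹ * (c * ‖w‖) := by field_simp; exact le_rfl
          _ ≤ c⁻¹ * 1 := by
              apply mul_le_mul_of_nonneg_left this (inv_pos.2 hc).le
          _ = c⁻¹ := mul_one _
      exact Metric.isCompact_of_isClosed_isBounded hclosed hbd
    exact (hcompact.image (qnorm_continuous.comp
      (continuous_const.matrix_mulVec continuous_id))).bddAbove
  rcases eq_or_ne v 0 with rfl | hv
  · simp only [Matrix.mulVec_zero]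
    have : qnorm Q (0 : Fin d → ℝ) = 0 := by simp [qnorm]
    rw [this, mul_zero]
  · have hqv : 0 < qnorm Q v := qnorm_pos hQ hv
    set u := (qnorm Q v)⁻¹ • v with hu
    have hqu : qnorm Q u = 1 := by
      rw [hu, qnorm_smul, abs_of_pos (inv_pos.2 hqv), inv_mul_cancel₀ hqv.ne']
    have hmem : qnorm Q (M.mulVec u) ∈ S := ⟨u, hqu, rfl⟩
    have hle : qnorm Q (M.mulVec u) ≤ qOpNorm Q M := le_csSup hbdd hmem
    have hMu : M.mulVec u = (qnorm Q v)⁻¹ • M.mulVec v := by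
      rw [hu, Matrix.mulVec_smul]
    have : qnorm Q (M.mulVec u) = (qnorm Q v)⁻¹ * qnorm Q (M.mulVec v) := by
      rw [hMu, qnorm_smul, abs_of_pos (inv_pos.2 hqv)]
    rw [this] at hle
    calc qnorm Q (M.mulVec v) = qnorm Q v * ((qnorm Q v)⁻¹ * qnorm Q (M.mulVec v)) := by
          field_simp
      _ ≤ qnorm Q v * qOpNorm Q M := mul_le_mul_of_nonneg_left hle hqv.le
      _ = qOpNorm Q M * qnorm Q v := mul_comm _ _



@[simp] lemma dotCLM_apply (v w : Fin d → ℝ) : dotCLM v w = v ⬝ᵥ w := rfl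
@[simp] lemma mulVecCLM_apply (M : Matrix (Fin d) (Fin d) ℝ) (v : Fin d → ℝ) :
    mulVecCLM M v = M.mulVec v := rfl

section F
variable {F : (Fin d → ℝ) → ℝ} {F' : (Fin d → ℝ) → Fin d → ℝ}
  {F'' : (Fin d → ℝ) → Matrix (Fin d) (Fin d) ℝ}

-- strong monotonicity of the gradient
lemma grad_mono {μ : ℝ}
    (hsc : ∀ x y, μ / 2 * (qnorm Q (y - x)) ^ 2 ≤ F y - F x - (F' x) ⬝ᵥ (y - x))
    (x y : Fin d → ℝ) :
    μ * (qnorm Q (y - x)) ^ 2 ≤ (F' y - F' x) ⬝ᵥ (y - x) := by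
  have h1 := hsc x y
  have h2 := hsc y x
  have hq : qnorm Q (x - y) = qnorm Q (y - x) := by
    rw [← neg_sub y x, show -(y-x) = (-1 : ℝ) • (y - x) by simp, qnorm_smul]; simp
  rw [hq] at h2
  have hdot : (F' y) ⬝ᵥ (x - y) = - ((F' y) ⬝ᵥ (y - x)) := by
    rw [show x - y = -(y - x) by ring, dotProduct_neg]
  rw [hdot] at h2
  have : (F' y - F' x) ⬝ᵥ (y - x) = (F' y) ⬝ᵥ (y - x) - (F' x) ⬝ᵥ (y - x) := by
    rw [sub_dotProduct]
  rw [this]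
  linarith

-- the gradient vanishes at the minimizer
lemma grad_min_zero (hFdiff : ∀ y, HasFDerivAt F (dotCLM (F' y)) y)
    (xstar : Fin d → ℝ) (hmin : ∀ y, F xstar ≤ F y) : F' xstar = 0 := by
  have hloc : IsLocalMin F xstar := by
    apply IsMinOn.isLocalMin (s := Set.univ)
    · intro y _; exact hmin y
    · exact Filter.univ_mem
  have hzero := hloc.hasFDerivAt_eq_zero (hFdiff xstar)
  funext i
  have := congrArg (fun L : (Fin d → ℝ) →L[ℝ] ℝ => L (Pi.single i 1)) hzero
  simpa [dotProduct_single] using this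

end F

section F2
variable {F : (Fin d → ℝ) → ℝ} {F' : (Fin d → ℝ) → Fin d → ℝ}
  {F'' : (Fin d → ℝ) → Matrix (Fin d) (Fin d) ℝ}

lemma line_hasDerivAt (x v : Fin d → ℝ) (t : ℝ) :
    HasDerivAt (fun s : ℝ => x + s • v) v t := by
  have h1 : HasDerivAt (fun s : ℝ => s • v) ((1:ℝ) • v) t := by
    simpa using (hasDerivAt_id t).smul_const v
  simpa using h1.const_add x

lemma Fprime_line_hasDerivAt (hFdiff2 : ∀ y, HasFDerivAt F' (mulVecCLM (F'' y)) y)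
    (x v : Fin d → ℝ) (t : ℝ) :
    HasDerivAt (fun s : ℝ => F' (x + s • v)) ((F'' (x + t • v)).mulVec v) t := by
  have := (hFdiff2 (x + t • v)).comp_hasDerivAt t (line_hasDerivAt x v t)
  exact this

-- quadratic form of Hessian bounded below
lemma hess_form_lower (hQ : Q.PosDef) {μ : ℝ}
    (hFdiff2 : ∀ y, HasFDerivAt F' (mulVecCLM (F'' y)) y)
    (hsc : ∀ x y, μ / 2 * (qnorm Q (y - x)) ^ 2 ≤ F y - F x - (F' x) ⬝ᵥ (y - x))
    (x v : Fin d → ℝ) :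
    μ * qnorm Q v ^ 2 ≤ v ⬝ᵥ (F'' x).mulVec v := by
  set ψ : ℝ → ℝ := fun t => v ⬝ᵥ F' (x + t • v) with hψ
  have hψd : ∀ t, HasDerivAt ψ (v ⬝ᵥ (F'' (x + t • v)).mulVec v) t := by
    intro t
    have h1 := Fprime_line_hasDerivAt hFdiff2 x v t
    have h2 := (dotCLM v).hasFDerivAt.comp_hasDerivAt t h1
    exact h2
  have hlb : ∀ t : ℝ, 0 < t → μ * t * qnorm Q v ^ 2 ≤ ψ t - ψ 0 := by
    intro t ht
    have hm := grad_mono (Q := Q) hsc x (x + t • v)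
    have hsub : (x + t • v) - x = t • v := by ring
    rw [hsub, qnorm_smul, abs_of_pos ht] at hm
    have hdot : (F' (x + t • v) - F' x) ⬝ᵥ (t • v)
        = t * (v ⬝ᵥ F' (x + t • v) - v ⬝ᵥ F' x) := by
      rw [dotProduct_smul, sub_dotProduct]
      rw [dotProduct_comm (F' (x + t • v)) v, dotProduct_comm (F' x) v]
      simp [smul_eq_mul]
    rw [hdot] at hm
    have hψt : ψ t - ψ 0 = v ⬝ᵥ F' (x + t • v) - v ⬝ᵥ F' x := by simp [hψ]
    rw [hψt]
    nlinarith [hm, ht]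
  have hder := hψd 0
  have hslope : Filter.Tendsto (slope ψ 0) (nhdsWithin 0 (Set.Ioi 0))
      (nhds (v ⬝ᵥ (F'' (x + (0:ℝ) • v)).mulVec v)) := by
    have h := hasDerivAt_iff_tendsto_slope.mp hder
    apply h.mono_left
    apply nhdsWithin_mono
    intro t ht
    exact Set.mem_compl_singleton_iff.mpr (ne_of_gt ht)
  have hlim : μ * qnorm Q v ^ 2 ≤ v ⬝ᵥ (F'' (x + (0:ℝ) • v)).mulVec v := by
    apply ge_of_tendsto hslope
    filter_upwards [self_mem_nhdsWithin] with t ht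
    simp only [Set.mem_Ioi] at ht
    have h1 := hlb t ht
    have : slope ψ 0 t = (ψ t - ψ 0) / t := by
      simp [slope_def_field]
    rw [this, le_div_iff₀ ht]
    nlinarith
  simpa using hlim

end F2

section F3
variable {F : (Fin d → ℝ) → ℝ} {F' : (Fin d → ℝ) → Fin d → ℝ}
  {F'' : (Fin d → ℝ) → Matrix (Fin d) (Fin d) ℝ}

lemma pos_form_invertible (hQ : Q.PosDef) {μ : ℝ} (hμ : 0 < μ)
    {M : Matrix (Fin d) (Fin d) ℝ}
    (h : ∀ v, μ * qnorm Q v ^ 2 ≤ v ⬝ᵥ M.mulVec v) : IsUnit M.det := by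
  rw [isUnit_iff_ne_zero]
  intro hdet
  obtain ⟨v, hv, hMv⟩ := (Matrix.exists_mulVec_eq_zero_iff).mpr hdet
  have h1 := h v
  rw [hMv] at h1
  simp only [dotProduct_zero] at h1
  have h2 := qnorm_pos hQ hv
  nlinarith [mul_pos hμ (pow_pos h2 2)]

-- FTC along a segment
lemma ftc_segment (hFdiff2 : ∀ y, HasFDerivAt F' (mulVecCLM (F'' y)) y)
    (hF''cont : Continuous F'') (x y : Fin d → ℝ) :
    F' y - F' x = ∫ t in (0:ℝ)..1, (F'' (x + t • (y - x))).mulVec (y - x) := by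
  set Δ := y - x with hΔ
  have key := intervalIntegral.integral_eq_sub_of_hasDerivAt
    (f := fun t : ℝ => F' (x + t • Δ))
    (f' := fun t : ℝ => (F'' (x + t • Δ)).mulVec Δ)
    (a := 0) (b := 1)
    (fun t _ => Fprime_line_hasDerivAt hFdiff2 x Δ t)
    ?_
  · rw [key]; simp [hΔ]
  · apply Continuous.intervalIntegrable
    exact ((hF''cont.comp ((continuous_const.add (continuous_id.smul continuous_const)))).matrix_mulVec continuous_const)

end F3

-- qnorm of an integral
lemma qnorm_intervalIntegral_le (hQ : Q.PosDef) {g : ℝ → Fin d → ℝ} (hg : Continuous g) :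
    qnorm Q (∫ t in (0:ℝ)..1, g t) ≤ ∫ t in (0:ℝ)..1, qnorm Q (g t) := by
  set u := ∫ t in (0:ℝ)..1, g t with hu
  have hqcont : Continuous fun t => qnorm Q (g t) := qnorm_continuous.comp hg
  have hw : ∀ z : Fin d → ℝ, dotCLM (Q.mulVec u) z = z ⬝ᵥ Q.mulVec u := by
    intro z
    rw [dotCLM_apply, dotProduct_comm]
  have hint : u ⬝ᵥ Q.mulVec u = ∫ t in (0:ℝ)..1, g t ⬝ᵥ Q.mulVec u := by
    have hcomm := (dotCLM (Q.mulVec u)).intervalIntegral_comp_comm (μ := MeasureTheory.volume)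
      (hg.intervalIntegrable 0 1)
    rw [← hu] at hcomm
    calc u ⬝ᵥ Q.mulVec u = dotCLM (Q.mulVec u) u := (hw u).symm
      _ = ∫ t in (0:ℝ)..1, dotCLM (Q.mulVec u) (g t) := hcomm.symm
      _ = ∫ t in (0:ℝ)..1, g t ⬝ᵥ Q.mulVec u := by
          congr 1; funext t; exact hw (g t)
  have hcs : ∀ t : ℝ, g t ⬝ᵥ Q.mulVec u ≤ qnorm Q (g t) * qnorm Q u :=
    fun t => qform_cs hQ (g t) u
  have hmono : (∫ t in (0:ℝ)..1, g t ⬝ᵥ Q.mulVec u)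
      ≤ ∫ t in (0:ℝ)..1, qnorm Q (g t) * qnorm Q u := by
    apply intervalIntegral.integral_mono_on (by norm_num)
    · exact (hg.dotProduct continuous_const).intervalIntegrable 0 1
    · exact (hqcont.mul continuous_const).intervalIntegrable 0 1
    · intro t _; exact hcs t
  have hq2 : qnorm Q u ^ 2 ≤ (∫ t in (0:ℝ)..1, qnorm Q (g t)) * qnorm Q u := by
    rw [qnorm_sq hQ, hint]
    calc (∫ t in (0:ℝ)..1, g t ⬝ᵥ Q.mulVec u)
        ≤ ∫ t in (0:ℝ)..1, qnorm Q (g t) * qnorm Q u := hmono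
      _ = (∫ t in (0:ℝ)..1, qnorm Q (g t)) * qnorm Q u := by
          rw [← intervalIntegral.integral_mul_const]
  rcases eq_or_lt_of_le (qnorm_nonneg (Q := Q) u) with h0 | hpos
  · rw [← h0]
    apply intervalIntegral.integral_nonneg (by norm_num)
    intro t _; exact qnorm_nonneg _
  · have := hq2
    rw [pow_two] at this
    exact le_of_mul_le_mul_right (by linarith) hpos

section F4
variable {F : (Fin d → ℝ) → ℝ} {F' : (Fin d → ℝ) → Fin d → ℝ}
  {F'' : (Fin d → ℝ) → Matrix (Fin d) (Fin d) ℝ}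

lemma key_quad_bound (hQ : Q.PosDef) (hd : 1 ≤ d)
    (hFdiff2 : ∀ y, HasFDerivAt F' (mulVecCLM (F'' y)) y)
    (hF''cont : Continuous F'')
    {xstar : Fin d → ℝ} (hgrad0 : F' xstar = 0)
    (hH : IsUnit (F'' xstar).det)
    {LH : ℝ}
    (hHessLip : ∀ x x',
      qOpNorm Q ((F'' xstar)⁻¹ * (F'' x - F'' x')) ≤ LH * qnorm Q (x - x'))
    (y : Fin d → ℝ) :
    qnorm Q ((F'' xstar)⁻¹.mulVec (F' y) - (y - xstar))
      ≤ LH / 2 * qnorm Q (y - xstar) ^ 2 := by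
  set H := F'' xstar with hHdef
  set Δ := y - xstar with hΔ
  have hline : Continuous fun t : ℝ => xstar + t • Δ :=
    continuous_const.add (continuous_id.smul continuous_const)
  have hgcont : Continuous fun t : ℝ => (H⁻¹ * (F'' (xstar + t • Δ) - H)).mulVec Δ := by
    apply Continuous.matrix_mulVec _ continuous_const
    exact continuous_const.matrix_mul ((hF''cont.comp hline).sub continuous_const)
  -- the integral identity
  have hftc := ftc_segment hFdiff2 hF''cont xstar y
  rw [hgrad0, sub_zero] at hftc
  have hintg : H⁻¹.mulVec (F' y) = ∫ t in (0:ℝ)..1, H⁻¹.mulVec ((F'' (xstar + t • Δ)).mulVec Δ) := by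
    rw [hftc]
    have := (mulVecCLM H⁻¹).intervalIntegral_comp_comm (μ := MeasureTheory.volume)
      (f := fun t : ℝ => (F'' (xstar + t • Δ)).mulVec Δ) (a := 0) (b := 1)
      (((hF''cont.comp hline).matrix_mulVec continuous_const).intervalIntegrable 0 1)
    simpa using this.symm
  have hdiff : H⁻¹.mulVec (F' y) - Δ
      = ∫ t in (0:ℝ)..1, (H⁻¹ * (F'' (xstar + t • Δ) - H)).mulVec Δ := by
    rw [hintg]
    have heq : (∫ t in (0:ℝ)..1, (H⁻¹ * (F'' (xstar + t • Δ) - H)).mulVec Δ)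
        = (∫ t in (0:ℝ)..1, H⁻¹.mulVec ((F'' (xstar + t • Δ)).mulVec Δ))
          - ∫ _t in (0:ℝ)..1, Δ := by
      rw [← intervalIntegral.integral_sub]
      · congr 1; funext t
        have e1 : (H⁻¹ * (F'' (xstar + t • Δ) - H)).mulVec Δ
            = H⁻¹.mulVec ((F'' (xstar + t • Δ) - H).mulVec Δ) := by
          rw [Matrix.mulVec_mulVec]
        rw [e1, Matrix.sub_mulVec, Matrix.mulVec_sub, Matrix.mulVec_mulVec,
          Matrix.mulVec_mulVec, Matrix.nonsing_inv_mul H hH, Matrix.one_mulVec]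
      · exact ((continuous_const.matrix_mulVec
          ((hF''cont.comp hline).matrix_mulVec continuous_const)).intervalIntegrable 0 1)
      · exact intervalIntegrable_const
    rw [heq]
    simp
  rw [hdiff]
  have h1 : qnorm Q (∫ t in (0:ℝ)..1, (H⁻¹ * (F'' (xstar + t • Δ) - H)).mulVec Δ)
      ≤ ∫ t in (0:ℝ)..1, qnorm Q ((H⁻¹ * (F'' (xstar + t • Δ) - H)).mulVec Δ) :=
    qnorm_intervalIntegral_le hQ hgcont
  have h2 : (∫ t in (0:ℝ)..1, qnorm Q ((H⁻¹ * (F'' (xstar + t • Δ) - H)).mulVec Δ))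
      ≤ ∫ t in (0:ℝ)..1, LH * t * qnorm Q Δ * qnorm Q Δ := by
    apply intervalIntegral.integral_mono_on (by norm_num)
    · exact ((qnorm_continuous (Q := Q)).comp hgcont).intervalIntegrable 0 1
    · apply Continuous.intervalIntegrable
      continuity
    · intro t ht
      obtain ⟨ht0, ht1⟩ := ht
      calc qnorm Q ((H⁻¹ * (F'' (xstar + t • Δ) - H)).mulVec Δ)
          ≤ qOpNorm Q (H⁻¹ * (F'' (xstar + t • Δ) - H)) * qnorm Q Δ :=
            qOpNorm_bound hQ hd _ _
        _ ≤ (LH * qnorm Q ((xstar + t • Δ) - xstar)) * qnorm Q Δ := by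
            apply mul_le_mul_of_nonneg_right _ (qnorm_nonneg _)
            have := hHessLip (xstar + t • Δ) xstar
            rw [hHdef]
            exact this
        _ = LH * t * qnorm Q Δ * qnorm Q Δ := by
            have : (xstar + t • Δ) - xstar = t • Δ := by ring
            rw [this, qnorm_smul, abs_of_nonneg ht0]; ring
  have h3 : (∫ t in (0:ℝ)..1, LH * t * qnorm Q Δ * qnorm Q Δ)
      = LH / 2 * qnorm Q Δ ^ 2 := by
    have : (fun t : ℝ => LH * t * qnorm Q Δ * qnorm Q Δ)
        = fun t : ℝ => t * (LH * qnorm Q Δ * qnorm Q Δ) := by funext t; ring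
    rw [this, intervalIntegral.integral_mul_const, integral_id]
    ring
  calc qnorm Q (∫ t in (0:ℝ)..1, (H⁻¹ * (F'' (xstar + t • Δ) - H)).mulVec Δ)
      ≤ ∫ t in (0:ℝ)..1, qnorm Q ((H⁻¹ * (F'' (xstar + t • Δ) - H)).mulVec Δ) := h1
    _ ≤ ∫ t in (0:ℝ)..1, LH * t * qnorm Q Δ * qnorm Q Δ := h2
    _ = LH / 2 * qnorm Q Δ ^ 2 := h3

end F4

lemma dot_bound (hQ : Q.PosDef) (hd : 1 ≤ d) (w : Fin d → ℝ) :
    ∃ K ≥ 0, ∀ y : Fin d → ℝ, |w ⬝ᵥ y| ≤ K * qnorm Q y := by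
  obtain ⟨c, hc, hcl⟩ := qnorm_lower hQ hd
  refine ⟨(∑ i, |w i|) / c, by positivity, fun y => ?_⟩
  have h1 : |w ⬝ᵥ y| ≤ (∑ i, |w i|) * ‖y‖ := by
    calc |w ⬝ᵥ y| ≤ ∑ i, |w i * y i| := Finset.abs_sum_le_sum_abs _ _
      _ ≤ ∑ i, |w i| * ‖y‖ := by
          apply Finset.sum_le_sum
          intro i _
          rw [abs_mul]
          exact mul_le_mul_of_nonneg_left (norm_le_pi_norm y i) (abs_nonneg _)
      _ = (∑ i, |w i|) * ‖y‖ := by rw [← Finset.sum_mul]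
  calc |w ⬝ᵥ y| ≤ (∑ i, |w i|) * ‖y‖ := h1
    _ ≤ (∑ i, |w i|) / c * qnorm Q y := by
        rw [div_mul_eq_mul_div, le_div_iff₀ hc]
        calc (∑ i, |w i|) * ‖y‖ * c = (∑ i, |w i|) * (c * ‖y‖) := by ring
          _ ≤ (∑ i, |w i|) * qnorm Q y := by
              apply mul_le_mul_of_nonneg_left (hcl y) (by positivity)

    _ = (∑ i, |w i|) / c * qnorm Q y := by ring

lemma dotCLM_sub (u v : Fin d → ℝ) : dotCLM (u - v) = dotCLM u - dotCLM v := by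
  ext w; simp [sub_dotProduct]

lemma dotCLM_eq_zero {v : Fin d → ℝ} (h : dotCLM v = 0) : v = 0 := by
  funext i
  have := congrArg (fun L : (Fin d → ℝ) →L[ℝ] ℝ => L (Pi.single i 1)) h
  simpa [dotProduct_single] using this

section Exist
variable {F : (Fin d → ℝ) → ℝ} {F' : (Fin d → ℝ) → Fin d → ℝ}

lemma exists_solution (hQ : Q.PosDef) (hd : 1 ≤ d)
    (hFdiff : ∀ y, HasFDerivAt F (dotCLM (F' y)) y)
    {μ : ℝ} (hμ : 0 < μ)
    (hsc : ∀ x y, μ / 2 * (qnorm Q (y - x)) ^ 2 ≤ F y - F x - (F' x) ⬝ᵥ (y - x))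
    (b : Fin d → ℝ) : ∃ x, F' x = b := by
  obtain ⟨c, hc, hcl⟩ := qnorm_lower hQ hd
  obtain ⟨K, hK, hKb⟩ := dot_bound hQ hd (F' 0 - b)
  set G : (Fin d → ℝ) → ℝ := fun y => F y - b ⬝ᵥ y with hG
  have hGdiff : ∀ y, HasFDerivAt G (dotCLM (F' y - b)) y := by
    intro y
    rw [dotCLM_sub]
    exact (hFdiff y).sub (dotCLM b).hasFDerivAt
  have hGcont : Continuous G := by
    have hFc : Continuous F := by
      rw [continuous_iff_continuousAt]
      exact fun y => (hFdiff y).continuousAt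
    exact hFc.sub (dotCLM b).continuous
  -- coercivity
  have hcoer : ∀ y : Fin d → ℝ, qnorm Q y > 2 * K / μ → G 0 < G y := by
    intro y hy
    have h1 := hsc 0 y
    simp only [sub_zero] at h1
    have h2 : |(F' 0 - b) ⬝ᵥ y| ≤ K * qnorm Q y := hKb y
    have h3 : (F' 0 - b) ⬝ᵥ y = F' 0 ⬝ᵥ y - b ⬝ᵥ y := sub_dotProduct _ _ _
    have h4 : G y - G 0 = F y - F 0 - b ⬝ᵥ y := by simp [hG]; ring
    have h5 : μ / 2 * qnorm Q y ^ 2 ≤ F y - F 0 - F' 0 ⬝ᵥ y := h1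
    have h6 : G y - G 0 ≥ μ / 2 * qnorm Q y ^ 2 + (F' 0 - b) ⬝ᵥ y := by
      rw [h4, h3]; linarith
    have h7 : (F' 0 - b) ⬝ᵥ y ≥ -(K * qnorm Q y) := neg_le_of_abs_le h2
    have h8 : μ / 2 * qnorm Q y ^ 2 - K * qnorm Q y > 0 := by
      have hq0 : 0 < qnorm Q y := lt_of_le_of_lt (by positivity) hy
      have : μ / 2 * qnorm Q y > K := by
        rw [gt_iff_lt, div_mul_eq_mul_div, lt_div_iff₀ (by norm_num : (0:ℝ) < 2)]
        calc K * 2 = μ * (2 * K / μ) := by field_simp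
          _ < μ * qnorm Q y := by exact mul_lt_mul_of_pos_left hy hμ
      nlinarith
    nlinarith [h6, h7, h8]
  -- minimize over a compact ball
  set R : ℝ := (2 * K / μ + 1) / c with hR
  have hR0 : 0 ≤ R := by positivity
  have hball : IsCompact (Metric.closedBall (0 : Fin d → ℝ) R) :=
    isCompact_closedBall _ _
  have hne : (Metric.closedBall (0 : Fin d → ℝ) R).Nonempty :=
    ⟨0, Metric.mem_closedBall_self hR0⟩
  obtain ⟨z, hz, hzmin⟩ := hball.exists_isMinOn hne hGcont.continuousOn
  have hglobal : ∀ y, G z ≤ G y := by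
    intro y
    by_cases hy : y ∈ Metric.closedBall (0 : Fin d → ℝ) R
    · exact hzmin hy
    · have hy' : ‖y‖ > R := by
        simp only [Metric.mem_closedBall, dist_zero_right, not_le] at hy
        exact hy
      have hq : qnorm Q y > 2 * K / μ := by
        calc 2 * K / μ < 2 * K / μ + 1 := by linarith
          _ = c * R := by rw [hR]; field_simp
          _ ≤ c * ‖y‖ := by
              apply mul_le_mul_of_nonneg_left hy'.le hc.le
          _ ≤ qnorm Q y := hcl y
      have := hcoer y hq
      have hz0 : G z ≤ G 0 := hzmin (Metric.mem_closedBall_self hR0)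
      linarith
  have hloc : IsLocalMin G z := by
    apply IsMinOn.isLocalMin (s := Set.univ)
    · intro y _; exact hglobal y
    · exact Filter.univ_mem
  have hzero := hloc.hasFDerivAt_eq_zero (hGdiff z)
  have := dotCLM_eq_zero hzero
  exact ⟨z, by rwa [sub_eq_zero] at this⟩

end Exist

-- MAIN

/-- Lemma `small_noise_close_solution`: for small `a`, the
solution of `∇F(x) = a` exists, is unique, and is close to `x⋆`. -/
theorem statement12
    {d : ℕ} (hd : 1 ≤ d)
    (Q : Matrix (Fin d) (Fin d) ℝ) (hQ : Q.PosDef)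
    (F : (Fin d → ℝ) → ℝ) (F' : (Fin d → ℝ) → Fin d → ℝ)
    (F'' : (Fin d → ℝ) → Matrix (Fin d) (Fin d) ℝ)
    -- `F` is twice continuously differentiable with gradient `F'` and Hessian `F''`
    (hFdiff : ∀ y, HasFDerivAt F (dotCLM (F' y)) y)
    (hFdiff2 : ∀ y, HasFDerivAt F' (mulVecCLM (F'' y)) y)
    (hF''cont : Continuous F'')
    -- μ-strong convexity and L-smoothness w.r.t. `‖·‖`, with unique minimizer `x⋆`
    (μ L : ℝ) (hμ : 0 < μ) (hμL : μ ≤ L)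
    (hsc : ∀ x y, μ / 2 * (qnorm Q (y - x)) ^ 2 ≤ F y - F x - (F' x) ⬝ᵥ (y - x))
    (hsm : ∀ x y, F y - F x - (F' x) ⬝ᵥ (y - x) ≤ L / 2 * (qnorm Q (y - x)) ^ 2)
    (xstar : Fin d → ℝ) (hmin : ∀ y, F xstar ≤ F y)
    -- Lipschitz Hessian in the instance-specific norm
    (LH : ℝ) (hLH : 0 < LH)
    (hHessLip : ∀ x x',
      qOpNorm Q ((F'' xstar)⁻¹ * (F'' x - F'' x')) ≤ LH * qnorm Q (x - x'))
    -- the right-hand side `a` is small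
    (a : Fin d → ℝ) (ha : qnorm Q ((F'' xstar)⁻¹.mulVec a) ≤ 1 / (4 * LH)) :
    (∃! xa : Fin d → ℝ, F' xa = a)
    ∧ ∀ xa : Fin d → ℝ, F' xa = a →
        qnorm Q (xa - xstar) ≤ 2 * qnorm Q ((F'' xstar)⁻¹.mulVec a)
        ∧ 2 * qnorm Q ((F'' xstar)⁻¹.mulVec a) ≤ 1 / (2 * LH) := by
  have hgrad0 : F' xstar = 0 := grad_min_zero hFdiff xstar hmin
  -- uniqueness of solutions of `F' x = b`
  have uniq : ∀ x y : Fin d → ℝ, F' x = F' y → x = y := by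
    intro x y hxy
    have hm := grad_mono (Q := Q) hsc x y
    rw [hxy] at hm
    simp only [sub_self, zero_dotProduct] at hm
    have hq : qnorm Q (y - x) = 0 := by
      rcases eq_or_lt_of_le (qnorm_nonneg (Q := Q) (y - x)) with h0 | hpos
      · exact h0.symm
      · nlinarith [mul_pos hμ (pow_pos hpos 2)]
    have := (qnorm_eq_zero_iff hQ).mp hq
    have : y = x := by
      have := sub_eq_zero.mp this
      exact this
    exact this.symm
  -- the Hessian at the minimiser is invertible
  have hH : IsUnit (F'' xstar).det :=
    pos_form_invertible hQ hμ (fun v => hess_form_lower hQ hFdiff2 hsc xstar v)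
  set H := F'' xstar with hHdef
  set b := qnorm Q (H⁻¹.mulVec a) with hb
  have hb0 : 0 ≤ b := qnorm_nonneg _
  -- key quadratic estimate
  have hkey : ∀ y : Fin d → ℝ,
      qnorm Q (H⁻¹.mulVec (F' y) - (y - xstar)) ≤ LH / 2 * qnorm Q (y - xstar) ^ 2 :=
    key_quad_bound hQ hd hFdiff2 hF''cont hgrad0 hH hHessLip
  -- consequence : any solution of `F' y = s • a` satisfies the basic inequality
  have hineq : ∀ (s : ℝ) (y : Fin d → ℝ), 0 ≤ s → F' y = s • a →
      qnorm Q (y - xstar) ≤ s * b + LH / 2 * qnorm Q (y - xstar) ^ 2 := by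
    intro s y hs hFy
    have h1 := hkey y
    rw [hFy] at h1
    have h2 : H⁻¹.mulVec (s • a) = s • H⁻¹.mulVec a := Matrix.mulVec_smul _ _ _
    have h3 : qnorm Q (H⁻¹.mulVec (s • a)) = s * b := by
      rw [h2, qnorm_smul, abs_of_nonneg hs, hb]
    have h4 : qnorm Q (y - xstar)
        ≤ qnorm Q (H⁻¹.mulVec (s • a)) + qnorm Q (H⁻¹.mulVec (s • a) - (y - xstar)) := by
      have := qnorm_sub_le hQ (H⁻¹.mulVec (s • a)) (H⁻¹.mulVec (s • a) - (y - xstar))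
      simpa using this
    rw [h3] at h4
    linarith
  -- existence of solutions
  have hexist : ∀ w : Fin d → ℝ, ∃ x, F' x = w :=
    fun w => exists_solution hQ hd hFdiff hμ hsc w
  -- solution path
  set sol : ℝ → (Fin d → ℝ) := fun s => Classical.choose (hexist (s • a)) with hsol
  have hsolp : ∀ s : ℝ, F' (sol s) = s • a := fun s => Classical.choose_spec (hexist (s • a))
  set φ : ℝ → ℝ := fun s => qnorm Q (sol s - xstar) with hφ
  have hφ0 : φ 0 = 0 := by
    have h0 : F' (sol 0) = F' xstar := by rw [hsolp 0, hgrad0, zero_smul]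
    have : sol 0 = xstar := uniq _ _ h0
    simp [hφ, this, qnorm]
  -- Lipschitz continuity of φ
  obtain ⟨K, hK, hKb⟩ := dot_bound hQ hd a
  have hlip : ∀ s t : ℝ, |φ s - φ t| ≤ K / μ * |s - t| := by
    intro s t
    have h1 : μ * qnorm Q (sol s - sol t) ^ 2 ≤ (F' (sol s) - F' (sol t)) ⬝ᵥ (sol s - sol t) :=
      grad_mono (Q := Q) hsc (sol t) (sol s)
    rw [hsolp s, hsolp t] at h1
    have h2 : (s • a - t • a) ⬝ᵥ (sol s - sol t) = (s - t) * (a ⬝ᵥ (sol s - sol t)) := by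
      rw [show s • a - t • a = (s - t) • a by rw [sub_smul], smul_dotProduct]
      simp
    rw [h2] at h1
    have h3 : (s - t) * (a ⬝ᵥ (sol s - sol t)) ≤ |s - t| * (K * qnorm Q (sol s - sol t)) := by
      calc (s - t) * (a ⬝ᵥ (sol s - sol t)) ≤ |(s - t) * (a ⬝ᵥ (sol s - sol t))| := le_abs_self _
        _ = |s - t| * |a ⬝ᵥ (sol s - sol t)| := abs_mul _ _
        _ ≤ |s - t| * (K * qnorm Q (sol s - sol t)) := by
            apply mul_le_mul_of_nonneg_left (hKb _) (abs_nonneg _)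
    have h4 : qnorm Q (sol s - sol t) ≤ K / μ * |s - t| := by
      rcases eq_or_lt_of_le (qnorm_nonneg (Q := Q) (sol s - sol t)) with h0 | hpos
      · rw [← h0]; positivity
      · have h5 : μ * qnorm Q (sol s - sol t) ≤ |s - t| * K := by
          have := le_trans h1 h3
          rw [pow_two] at this
          nlinarith
        rw [div_mul_eq_mul_div, le_div_iff₀ hμ]
        nlinarith
    calc |φ s - φ t| ≤ qnorm Q (sol s - sol t) := by
          have := abs_qnorm_sub_qnorm_le hQ (sol s - xstar) (sol t - xstar)
          have heq : (sol s - xstar) - (sol t - xstar) = sol s - sol t := by ring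
          rw [heq] at this
          exact this
      _ ≤ K / μ * |s - t| := h4
  have hφcont : Continuous φ := by
    apply LipschitzWith.continuous (K := Real.toNNReal (K / μ))
    apply LipschitzWith.of_dist_le_mul
    intro s t
    rw [Real.dist_eq, Real.dist_eq]
    calc |φ s - φ t| ≤ K / μ * |s - t| := hlip s t
      _ ≤ Real.toNNReal (K / μ) * |s - t| := by
          apply mul_le_mul_of_nonneg_right _ (abs_nonneg _)
          exact Real.le_coe_toNNReal _
  -- φ never hits 1/(2 LH) on [0,1]
  have hnever : ∀ s ∈ Set.Icc (0:ℝ) 1, φ s ≠ 1 / (2 * LH) := by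
    rintro s ⟨hs0, hs1⟩ heq
    have h1 := hineq s (sol s) hs0 (hsolp s)
    simp only [hφ] at heq
    rw [heq] at h1
    have e : LH / 2 * (1 / (2 * LH)) ^ 2 = 1 / (8 * LH) := by
      field_simp; ring
    rw [e] at h1
    have hsb : s * b ≤ 1 / (4 * LH) := by
      calc s * b ≤ 1 * b := by nlinarith
        _ = b := one_mul b
        _ ≤ 1 / (4 * LH) := ha
    have h8 : 0 < 8 * LH := by linarith
    have hcontra : 1 / (2 * LH) ≤ 3 / (8 * LH) := by
      calc 1 / (2 * LH) ≤ s * b + 1 / (8 * LH) := h1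
        _ ≤ 1 / (4 * LH) + 1 / (8 * LH) := by linarith
        _ = 3 / (8 * LH) := by field_simp; ring
    rw [div_le_div_iff₀ (by linarith) h8] at hcontra
    linarith
  -- conclusion via the intermediate value theorem
  have hφ1 : φ 1 < 1 / (2 * LH) := by
    by_contra hge
    push_neg at hge
    have hmem : (1 / (2 * LH)) ∈ Set.Icc (φ 0) (φ 1) := by
      constructor
      · rw [hφ0]; positivity
      · exact hge
    obtain ⟨s, hs, hseq⟩ := intermediate_value_Icc (by norm_num : (0:ℝ) ≤ 1)
      hφcont.continuousOn hmem
    exact hnever s hs hseq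
  have hsol1 : F' (sol 1) = a := by rw [hsolp 1, one_smul]
  constructor
  · exact ⟨sol 1, hsol1, fun y hy => uniq y (sol 1) (by rw [hy, hsol1])⟩
  · intro xa hxa
    have hxa1 : xa = sol 1 := uniq xa (sol 1) (by rw [hxa, hsol1])
    have hr : qnorm Q (xa - xstar) = φ 1 := by rw [hφ, hxa1]
    have h2b : 2 * b ≤ 1 / (2 * LH) := by
      calc 2 * b ≤ 2 * (1 / (4 * LH)) := by linarith
        _ = 1 / (2 * LH) := by field_simp; ring
    refine ⟨?_, h2b⟩
    set r := qnorm Q (xa - xstar) with hrdef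
    have hrφ : r = φ 1 := hr
    have hrlt : r < 1 / (2 * LH) := by rw [hrφ]; exact hφ1
    have hr0 : 0 ≤ r := qnorm_nonneg _
    have hineq1 : r ≤ b + LH / 2 * r ^ 2 := by
      have := hineq 1 xa (by norm_num) (by rw [hxa, one_smul])
      rw [← hrdef] at this
      linarith [this]
    have hsq : LH / 2 * r ^ 2 ≤ r / 4 := by
      have : r ^ 2 ≤ (1 / (2 * LH)) * r := by
        rw [pow_two]
        apply mul_le_mul_of_nonneg_right hrlt.le hr0
      calc LH / 2 * r ^ 2 ≤ LH / 2 * ((1 / (2 * LH)) * r) := by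
            apply mul_le_mul_of_nonneg_left this (by positivity)
        _ = r / 4 := by field_simp; ring
    linarith

end
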